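/- arXiv:1511.05337 — 3 statements merged into one kernel-verified Lean document; each statement's English description precedes it below -/
import Mathlib

section
/- Let S^B be a Bernoulli sample with inclusion probability f = n/N from {1,...,N} (0 < n < N), and couple it with a simple random sample S of fixed size n as follows: if |S^B| = n set S = S^B; if |S^B| < n augment S^B with a simple random sample of size n − |S^B| from the complement; if |S^B| > n remove a simple random sample of size |S^B| − n from S^B. Then S is a simple random sample without replacement of size n from {1,...,N}. -/
open Finset

/-!
Conditionally on its size `k`, the Bernoulli sample is uniform on the `k`-subsets, and the
correction step (add a uniform `(n - k)`-subset of the complement, or delete a uniform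
`(k - n)`-subset) maps the uniform distribution on `k`-subsets to the uniform distribution on
`n`-subsets. Indeed each `n`-set `s` is reached from exactly `C(n, k)` (resp. `C(N - n, k - n)`)
sets of size `k`, and `C(N, n) C(n, k) = C(N, k) C(N - k, n - k)`. Hence the output is uniform
whatever the inclusion probability, and averaging over `k` only uses
`∑ₖ C(N, k) fᵏ (1 - f)ᴺ⁻ᵏ = 1`.
-/

variable {α : Type*} [Fintype α] [DecidableEq α]

/-- The probability that Hájek's correction step turns the Bernoulli sample `b` into `s`. -/
noncomputable def hajekKernel (n : ℕ) (b s : Finset α) : ℝ :=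
  if #b = n then (if s = b then 1 else 0)
  else if #b < n then
    (if b ⊆ s then ((Fintype.card α - #b).choose (n - #b) : ℝ)⁻¹ else 0)
  else
    (if s ⊆ b then ((#b).choose (#b - n) : ℝ)⁻¹ else 0)

omit [DecidableEq α] in
theorem sum_mul_eq_sum_range_mul_sum_powersetCard {R : Type*} [NonUnitalNonAssocSemiring R]
    (w : ℕ → R) (g : Finset α → R) :
    ∑ b, w #b * g b =
      ∑ k ∈ range (Fintype.card α + 1), w k * ∑ b ∈ powersetCard k univ, g b := by
  classical
  rw [← sum_fiberwise_of_maps_to (g := card) (t := range (Fintype.card α + 1))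
    fun b _ ↦ mem_range.2 (Nat.lt_succ_of_le (card_le_univ b))]
  refine sum_congr rfl fun k _ ↦ ?_
  rw [mul_sum, powersetCard_eq_filter, powerset_univ]
  exact sum_congr rfl fun b hb ↦ by rw [(mem_filter.1 hb).2]

theorem sum_powersetCard_hajekKernel (s : Finset α) (k : ℕ) :
    ∑ b ∈ powersetCard k univ, hajekKernel #s b s =
      ((Fintype.card α).choose k : ℝ) / (Fintype.card α).choose #s := by
  have hs : #s ≤ Fintype.card α := card_le_univ s
  have hchoose : ((Fintype.card α).choose #s : ℝ) ≠ 0 := by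
    exact_mod_cast (Nat.choose_pos hs).ne'
  have hcard : ∀ b ∈ powersetCard k (univ : Finset α), #b = k :=
    fun _ hb ↦ mem_powersetCard_univ.1 hb
  unfold hajekKernel
  rw [sum_congr rfl fun b hb ↦ by rw [hcard b hb]]
  rcases lt_trichotomy k #s with hlt | rfl | hgt
  · have hsub : {b ∈ powersetCard k (univ : Finset α) | b ⊆ s} = powersetCard k s := by
      ext b; simp [mem_powersetCard, and_comm]
    have hkey : ((Fintype.card α).choose #s * (#s).choose k : ℝ) =
        (Fintype.card α).choose k * (Fintype.card α - k).choose (#s - k) := by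
      exact_mod_cast Nat.choose_mul hlt.le
    have hpos : ((Fintype.card α - k).choose (#s - k) : ℝ) ≠ 0 := by
      exact_mod_cast (Nat.choose_pos (Nat.sub_le_sub_right hs k)).ne'
    simp only [hlt.ne, hlt, if_true, if_false]
    rw [sum_ite, sum_const_zero, add_zero, sum_const, hsub, card_powersetCard, nsmul_eq_mul]
    field_simp
    linear_combination hkey
  · simp [sum_ite_eq, hchoose]
  · have hkey : ((Fintype.card α).choose k * k.choose #s : ℝ) =
        (Fintype.card α).choose #s * (Fintype.card α - #s).choose (k - #s) := by
      exact_mod_cast Nat.choose_mul hgt.le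
    have hpos : (k.choose #s : ℝ) ≠ 0 := by exact_mod_cast (Nat.choose_pos hgt.le).ne'
    simp only [hgt.ne', lt_asymm hgt, if_false]
    rw [sum_ite, sum_const_zero, add_zero, sum_const,
      card_filter_powersetCard_subset s univ k (subset_univ s) hgt.le, card_univ,
      Nat.choose_symm hgt.le, nsmul_eq_mul]
    field_simp
    linear_combination -hkey

theorem sum_bernoulli_mul_hajekKernel (s : Finset α) (f : ℝ) :
    ∑ b, f ^ #b * (1 - f) ^ (Fintype.card α - #b) * hajekKernel #s b s =
      ((Fintype.card α).choose #s : ℝ)⁻¹ := by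
  calc _ = ∑ k ∈ range (Fintype.card α + 1), f ^ k * (1 - f) ^ (Fintype.card α - k) *
        (((Fintype.card α).choose k : ℝ) / (Fintype.card α).choose #s) := by
          rw [sum_mul_eq_sum_range_mul_sum_powersetCard
            (fun k ↦ f ^ k * (1 - f) ^ (Fintype.card α - k)) (hajekKernel #s · s)]
          simp_rw [sum_powersetCard_hajekKernel]
    _ = (f + (1 - f)) ^ Fintype.card α / (Fintype.card α).choose #s := by
          rw [add_pow, sum_div]
          simp_rw [mul_div_assoc]
    _ = _ := by simp

theorem hajek_coupling_srs_general (N n : ℕ)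
    (s : Finset (Fin N)) (hs : s.card = n) :
    ∑ b : Finset (Fin N),
      (((n : ℝ) / N) ^ b.card * (1 - (n : ℝ) / N) ^ (N - b.card)) *
        (if b.card = n then (if s = b then (1 : ℝ) else 0)
         else if b.card < n then
           (if b ⊆ s then (((N - b.card).choose (n - b.card) : ℝ))⁻¹ else 0)
         else
           (if s ⊆ b then ((b.card.choose (b.card - n) : ℝ))⁻¹ else 0))
      = ((N.choose n : ℝ))⁻¹ := by
  subst hs
  simpa only [hajekKernel, Fintype.card_fin] using sum_bernoulli_mul_hajekKernel s ((#s : ℝ) / N)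

/-- Hájek's coupling of Bernoulli sampling and simple random sampling: starting
from a Bernoulli sample `b` with inclusion probability `f = n/N`, keep it if
`|b| = n`, augment it by a simple random sample of the complement if `|b| < n`,
and remove a simple random sample of `b` if `|b| > n`.  The resulting sample `s`
is a simple random sample of size `n`: for every `s` with `|s| = n`, the total
probability of producing `s` equals `1 / C(N,n)`. -/
theorem hajek_coupling_srs (N n : ℕ) (hn : 0 < n) (hnN : n < N)
    (s : Finset (Fin N)) (hs : s.card = n) :
    ∑ b : Finset (Fin N),
      (((n : ℝ) / N) ^ b.card * (1 - (n : ℝ) / N) ^ (N - b.card)) *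
        (if b.card = n then (if s = b then (1 : ℝ) else 0)
         else if b.card < n then
           (if b ⊆ s then (((N - b.card).choose (n - b.card) : ℝ))⁻¹ else 0)
         else
           (if s ⊆ b then ((b.card.choose (b.card - n) : ℝ))⁻¹ else 0))
      = ((N.choose n : ℝ))⁻¹ :=
  hajek_coupling_srs_general N n s hs
end

section
/- Let S^WR be a with-replacement simple random sample of n draws from {1,...,N}, let S^d be its set of distinct units of size n^d, and let S = S^d ∪ S^c where S^c is a simple random sample without replacement of size n − n^d from {1,...,N} \ S^d. Then S is a simple random sample without replacement of size n from {1,...,N}. -/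
/-!
Summing the output probability of a fixed `n`-set over all `n`-sets gives `1`, since each draw
`ω` spreads its mass `N⁻ⁿ` uniformly over the `n`-sets containing its distinct units. Relabelling
the units by a permutation of the population maps draws to draws bijectively, so all `n`-sets
are output with the same probability, which is therefore `1 / C(N,n)`.
-/

open Finset

section

variable {α : Type*} [Fintype α] [DecidableEq α]

/-- The probability that the coupling outputs `s` when the population is `α`: the draw
`ω : Fin n → α` has probability `|α|⁻ⁿ`, and given its set of distinct units `t`, the completion
is uniform over the `C(|α| - |t|, n - |t|)` many `n`-sets containing `t`. -/
noncomputable def coupledSampleProb (n : ℕ) (s : Finset α) : ℝ :=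
  ∑ ω : Fin n → α, ((Fintype.card α : ℝ) ^ n)⁻¹ *
    if image ω univ ⊆ s then
      (((Fintype.card α - #(image ω univ)).choose (n - #(image ω univ)) : ℝ))⁻¹
    else 0

lemma sum_powersetCard_ite_subset_inv_choose {n : ℕ} (hn : n ≤ Fintype.card α)
    (t : Finset α) (htn : #t ≤ n) :
    ∑ u ∈ powersetCard n univ,
      (if t ⊆ u then (((Fintype.card α - #t).choose (n - #t) : ℝ))⁻¹ else 0) = 1 := by
  rw [← sum_filter, sum_const,
    card_filter_powersetCard_subset _ _ _ (subset_univ t) htn, card_univ, nsmul_eq_mul]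
  exact mul_inv_cancel₀ (Nat.cast_ne_zero.2 (Nat.choose_pos (by omega)).ne')

lemma sum_coupledSampleProb {n : ℕ} (hn : n ≤ Fintype.card α) :
    ∑ s ∈ powersetCard n (univ : Finset α), coupledSampleProb n s = 1 := by
  have hpow : ((Fintype.card α : ℝ) ^ n) ≠ 0 := by
    rcases Nat.eq_zero_or_pos n with rfl | hpos
    · simp
    · exact pow_ne_zero _ (Nat.cast_ne_zero.2 (by omega))
  unfold coupledSampleProb
  rw [sum_comm]
  have hdraw (ω : Fin n → α) :
      ∑ u ∈ powersetCard n univ, ((Fintype.card α : ℝ) ^ n)⁻¹ *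
        (if image ω univ ⊆ u then
          (((Fintype.card α - #(image ω univ)).choose (n - #(image ω univ)) : ℝ))⁻¹ else 0) =
      ((Fintype.card α : ℝ) ^ n)⁻¹ := by
    rw [← mul_sum, sum_powersetCard_ite_subset_inv_choose hn _
      (card_image_le.trans_eq (card_fin n)), mul_one]
  simp only [hdraw, sum_const, card_univ, Fintype.card_fun, Fintype.card_fin, nsmul_eq_mul,
    Nat.cast_pow]
  exact mul_inv_cancel₀ hpow

lemma coupledSampleProb_map_perm (n : ℕ) (σ : Equiv.Perm α) (s : Finset α) :
    coupledSampleProb n (s.map σ.toEmbedding) = coupledSampleProb n s := by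
  unfold coupledSampleProb
  refine (Fintype.sum_equiv ((Equiv.refl _).arrowCongr σ) _ _ fun ω => ?_).symm
  have himage : image (σ ∘ ω) univ = (image ω univ).map σ.toEmbedding := by
    rw [map_eq_image, image_image]; rfl
  rw [show (Equiv.refl (Fin n)).arrowCongr σ ω = σ ∘ ω from rfl, himage]
  simp only [map_subset_map, card_map]

lemma coupledSampleProb_eq_of_card_eq (n : ℕ) {s u : Finset α} (h : #s = #u) :
    coupledSampleProb n u = coupledSampleProb n s := by
  obtain ⟨σ, rfl⟩ := Equiv.Perm.exists_map_finset_eq s u h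
  exact coupledSampleProb_map_perm n σ s

theorem coupledSampleProb_eq_inv_choose {n : ℕ} (hn : n ≤ Fintype.card α) {s : Finset α}
    (hs : #s = n) : coupledSampleProb n s = ((Fintype.card α).choose n : ℝ)⁻¹ := by
  have htotal := sum_coupledSampleProb hn
  have hconst : ∀ u ∈ powersetCard n (univ : Finset α),
      coupledSampleProb n u = coupledSampleProb n s := fun u hu =>
    coupledSampleProb_eq_of_card_eq n ((mem_powersetCard.1 hu).2.trans hs.symm).symm
  rw [sum_congr rfl hconst, sum_const, card_powersetCard, card_univ, nsmul_eq_mul] at htotal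
  exact eq_inv_of_mul_eq_one_right htotal

end

theorem sir_si_coupling_srs_general (N n : ℕ) (hnN : n ≤ N)
    (s : Finset (Fin N)) (hs : s.card = n) :
    ∑ ω : Fin n → Fin N, ((N : ℝ) ^ n)⁻¹ *
      (if Finset.image ω Finset.univ ⊆ s then
        (((N - (Finset.image ω Finset.univ).card).choose
            (n - (Finset.image ω Finset.univ).card) : ℝ))⁻¹
       else 0)
      = ((N.choose n : ℝ))⁻¹ := by
  simpa only [coupledSampleProb, Fintype.card_fin] using
    coupledSampleProb_eq_inv_choose (by rwa [Fintype.card_fin]) hs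

/-- Coupling of with-replacement and without-replacement simple random sampling
(Algorithm 2): draw `n` times with replacement (uniform draws
`ω : Fin n → Fin N`), keep the set of distinct units `S^d = image ω`, and
complete it by a simple random sample of size `n − |S^d|` from the complement.
The resulting sample is a simple random sample without replacement of size `n`:
for every `s` with `|s| = n`, the total probability of producing `s` is
`1 / C(N,n)`. -/
theorem sir_si_coupling_srs (N n : ℕ) (hn : 0 < n) (hnN : n ≤ N)
    (s : Finset (Fin N)) (hs : s.card = n) :
    ∑ ω : Fin n → Fin N, ((N : ℝ) ^ n)⁻¹ *
      (if Finset.image ω Finset.univ ⊆ s then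
        (((N - (Finset.image ω Finset.univ).card).choose
            (n - (Finset.image ω Finset.univ).card) : ℝ))⁻¹
       else 0)
      = ((N.choose n : ℝ))⁻¹ :=
  sir_si_coupling_srs_general N n hnN s hs
end

section
/- Let (Z_1,...,Z_n) and (X_1,...,X_n) be random vectors on a common probability space and let D = (D_1,...,D_n) be multinomial(m; 1/n,...,1/n) independent of (Z,X). Define Z̄* = m^{-1} Σ_j D_j Z_j and X̄* = m^{-1} Σ_j D_j X_j, Z̄ = n^{-1} Σ_j Z_j, X̄ = n^{-1} Σ_j X_j. Then E(Z̄* − X̄*)² ≤ E(Z̄ − X̄)² + m^{-1} E[ n^{-1} Σ_j ((Z_j − X_j) − (Z̄ − X̄))² ]. -/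
open MeasureTheory Finset

/-
Averaging over the uniform resampling `d : Fin m → Fin n` is taking the conditional expectation
given `(Z, X)`. Conditionally, `Z̄* − X̄*` is the mean of `m` independent uniform draws from the
values `Y_j = Z_j − X_j`, so its conditional second moment is `Ȳ² + m⁻¹ · n⁻¹ Σ_j (Y_j − Ȳ)²`:
the square of its conditional mean plus its conditional variance. Integrating over `Ω` gives the
bound, in fact with equality.
-/

open Fintype

section Resampling

variable {α : Type*} [Fintype α]

theorem sum_pi_fin_succ {M : Type*} [AddCommMonoid M] {m : ℕ} (f : (Fin (m + 1) → α) → M) :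
    ∑ d, f d = ∑ a, ∑ d : Fin m → α, f (Fin.cons a d) := by
  rw [← Fintype.sum_prod_type']
  exact (Fintype.sum_equiv (Fin.consEquiv fun _ => α) _ f fun _ => rfl).symm

theorem card_mul_sum_resample_sum {R : Type*} [CommRing R] (y : α → R) (m : ℕ) :
    (card α : R) * ∑ d : Fin m → α, ∑ k, y (d k) = m * card α ^ m * ∑ a, y a := by
  induction m with
  | zero => simp
  | succ m ih =>
    simp only [sum_pi_fin_succ, Fin.sum_univ_succ, Fin.cons_zero, Fin.cons_succ,
      sum_add_distrib, sum_const, card_univ, card_fun, Fintype.card_fin, nsmul_eq_mul, ← mul_sum]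
    push_cast
    linear_combination (card α : R) * ih

theorem card_sq_mul_sum_resample_sum_sq {R : Type*} [CommRing R] (y : α → R) (m : ℕ) :
    (card α : R) ^ 2 * ∑ d : Fin m → α, (∑ k, y (d k)) ^ 2
      = m * card α ^ (m + 1) * ∑ a, y a ^ 2 + m * (m - 1) * card α ^ m * (∑ a, y a) ^ 2 := by
  induction m with
  | zero => simp
  | succ m ih =>
    simp only [sum_pi_fin_succ, Fin.sum_univ_succ, Fin.cons_zero, Fin.cons_succ, add_sq,
      sum_add_distrib, sum_const, card_univ, card_fun, Fintype.card_fin, nsmul_eq_mul, ← mul_sum,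
      ← sum_mul, mul_assoc]
    push_cast
    linear_combination
      (card α : R) * ih + 2 * (card α : R) * (∑ a, y a) * card_mul_sum_resample_sum y m

theorem mean_sq_sub_mean {R : Type*} [Field R] (y : α → R) (hα : (card α : R) ≠ 0) :
    (card α : R)⁻¹ * ∑ a, (y a - (card α : R)⁻¹ * ∑ b, y b) ^ 2
      = (card α : R)⁻¹ * ∑ a, y a ^ 2 - ((card α : R)⁻¹ * ∑ a, y a) ^ 2 := by
  simp only [sub_sq, sum_sub_distrib, sum_add_distrib, mul_assoc, ← mul_sum, ← sum_mul,
    sum_const, card_univ, nsmul_eq_mul]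
  field_simp
  ring

theorem sum_resample_mean_sq {R : Type*} [Field R] [CharZero R] [Nonempty α] {m : ℕ}
    (hm : m ≠ 0) (y : α → R) :
    ∑ d : Fin m → α, ((card α : R) ^ m)⁻¹ * ((m : R)⁻¹ * ∑ k, y (d k)) ^ 2
      = ((card α : R)⁻¹ * ∑ a, y a) ^ 2
        + (m : R)⁻¹ * ((card α : R)⁻¹ * ∑ a, (y a - (card α : R)⁻¹ * ∑ b, y b) ^ 2) := by
  have hα : (card α : R) ≠ 0 := Nat.cast_ne_zero.2 card_ne_zero
  have hm' : (m : R) ≠ 0 := Nat.cast_ne_zero.2 hm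
  have hmoment := card_sq_mul_sum_resample_sum_sq y m
  simp only [mul_pow, ← mul_sum, mean_sq_sub_mean y hα]
  field_simp
  linear_combination hmoment

theorem sum_integral_resample_mean_sq {Ω : Type*} [Nonempty α] [MeasurableSpace Ω]
    {μ : Measure Ω} {m : ℕ} (hm : m ≠ 0) (Y : α → Ω → ℝ) (hY : ∀ a, MemLp (Y a) 2 μ) :
    ∑ d : Fin m → α, ((card α : ℝ) ^ m)⁻¹ * ∫ ω, ((m : ℝ)⁻¹ * ∑ k, Y (d k) ω) ^ 2 ∂μ
      = ∫ ω, ((card α : ℝ)⁻¹ * ∑ a, Y a ω) ^ 2 ∂μ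
        + (m : ℝ)⁻¹ * ∫ ω, (card α : ℝ)⁻¹ * ∑ a, (Y a ω - (card α : ℝ)⁻¹ * ∑ b, Y b ω) ^ 2 ∂μ := by
  have hresample (d : Fin m → α) : MemLp (fun ω => (m : ℝ)⁻¹ * ∑ k, Y (d k) ω) 2 μ :=
    (memLp_finsetSum _ fun k _ => hY (d k)).const_mul _
  have hmean : MemLp (fun ω => (card α : ℝ)⁻¹ * ∑ a, Y a ω) 2 μ :=
    (memLp_finsetSum _ fun a _ => hY a).const_mul _
  have hdev : Integrable (fun ω => (card α : ℝ)⁻¹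
      * ∑ a, (Y a ω - (card α : ℝ)⁻¹ * ∑ b, Y b ω) ^ 2) μ :=
    (integrable_finsetSum _ fun a _ => ((hY a).sub hmean).integrable_sq).const_mul _
  simp only [← integral_const_mul]
  rw [← integral_finsetSum _ fun d _ => (hresample d).integrable_sq.const_mul _,
    ← integral_add hmean.integrable_sq (hdev.const_mul _)]
  congr 1 with ω
  exact sum_resample_mean_sq hm fun a => Y a ω

end Resampling

/-- The weights `d : Fin m → Fin n`, each of probability `n⁻ᵐ`, model the multinomial vector
`D_j = #{k | d k = j}`; summing over `d` outside `∫ ∂μ` is independence of `D` from `(Z, X)`. -/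
theorem bootstrap_coupling_bound_general
    (Ω : Type) [MeasurableSpace Ω] (μ : Measure Ω)
    (n m : ℕ) (hn : 0 < n) (hm : 0 < m)
    (Z X : Fin n → Ω → ℝ)
    (hZ2 : ∀ j, MemLp (Z j) 2 μ) (hX2 : ∀ j, MemLp (X j) 2 μ) :
    ∑ d : Fin m → Fin n, ((n : ℝ) ^ m)⁻¹ *
        ∫ ω, ((m : ℝ)⁻¹ * ∑ k, Z (d k) ω - (m : ℝ)⁻¹ * ∑ k, X (d k) ω) ^ 2 ∂μ
      ≤ (∫ ω, ((n : ℝ)⁻¹ * ∑ j, Z j ω - (n : ℝ)⁻¹ * ∑ j, X j ω) ^ 2 ∂μ)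
        + (m : ℝ)⁻¹ *
          ∫ ω, (n : ℝ)⁻¹ * ∑ j, ((Z j ω - X j ω)
            - ((n : ℝ)⁻¹ * ∑ i, Z i ω - (n : ℝ)⁻¹ * ∑ i, X i ω)) ^ 2 ∂μ := by
  have : Nonempty (Fin n) := ⟨⟨0, hn⟩⟩
  have h := sum_integral_resample_mean_sq hm.ne' (fun j ω => Z j ω - X j ω)
    fun j => (hZ2 j).sub (hX2 j)
  simp only [Fintype.card_fin] at h
  simp only [← mul_sub, ← sum_sub_distrib]
  exact h.le

/-- Bootstrap coupling bound: with the same multinomial resampling weights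
(modeled by uniform draws `d : Fin m → Fin n`, independent of `(Z,X)` by
product-space construction) applied to both sequences,
`E(Z̄* − X̄*)² ≤ E(Z̄ − X̄)² + m⁻¹ E[ n⁻¹ Σ_j ((Z_j − X_j) − (Z̄ − X̄))² ]`. -/
theorem bootstrap_coupling_bound
    (Ω : Type) [MeasurableSpace Ω] (μ : Measure Ω) [IsProbabilityMeasure μ]
    (n m : ℕ) (hn : 0 < n) (hm : 0 < m)
    (Z X : Fin n → Ω → ℝ)
    (hZmeas : ∀ j, Measurable (Z j)) (hXmeas : ∀ j, Measurable (X j))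
    (hZ2 : ∀ j, MemLp (Z j) 2 μ) (hX2 : ∀ j, MemLp (X j) 2 μ) :
    ∑ d : Fin m → Fin n, ((n : ℝ) ^ m)⁻¹ *
        ∫ ω, ((m : ℝ)⁻¹ * ∑ k, Z (d k) ω - (m : ℝ)⁻¹ * ∑ k, X (d k) ω) ^ 2 ∂μ
      ≤ (∫ ω, ((n : ℝ)⁻¹ * ∑ j, Z j ω - (n : ℝ)⁻¹ * ∑ j, X j ω) ^ 2 ∂μ)
        + (m : ℝ)⁻¹ *
          ∫ ω, (n : ℝ)⁻¹ * ∑ j, ((Z j ω - X j ω)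
            - ((n : ℝ)⁻¹ * ∑ i, Z i ω - (n : ℝ)⁻¹ * ∑ i, X i ω)) ^ 2 ∂μ :=
  bootstrap_coupling_bound_general Ω μ n m hn hm Z X hZ2 hX2
end
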